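/- Let V : ℝ × [0,T] → ℝ be C^{2,1} with ∂ₓV > 0 everywhere, satisfying ∂ₜV = α·∂ₓV - c where α = α(x, T-t, φ), φ = -∂ₓ²V/∂ₓV, and α, c are C¹. Define ψ(x,τ) = 1/∂ₓV(x,t) with τ = T-t. Then ψ satisfies -∂_τψ + (total x-derivative of α)·ψ - α·φ·ψ - ψ²·∂ₓc = 0, i.e., ∂_τψ = ∂ₓα·ψ - α·φ·ψ - ψ²·∂ₓc. -/

import Mathlib

/-!
Along the time slice `t = T - τ`, the PDE determines `α(·, τ, φ(·, τ))` as
`(∂ₜV + c) / ∂ₓV`, so it is differentiable in `x` and `∂ₓ∂ₜV = ∂ₓα · ∂ₓV + α · ∂ₓ²V - ∂ₓc`.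
Differentiating `ψ = 1 / ∂ₓV(x, T - τ)` in `τ` gives `∂ₜ∂ₓV / (∂ₓV)²`; the mixed partials of
the `C²` function `V` commute, and `∂ₓ²V = -φ ∂ₓV` turns the middle term into `-α φ ψ`.
-/

open Function

section PartialDeriv

variable {E : Type*} [NormedAddCommGroup E] [NormedSpace ℝ E] {F : ℝ → ℝ → E}

theorem deriv_fst_eq_fderiv_uncurry {x t : ℝ} (hF : DifferentiableAt ℝ (uncurry F) (x, t)) :
    deriv (fun y => F y t) x = fderiv ℝ (uncurry F) (x, t) (1, 0) :=
  (hF.hasFDerivAt.comp_hasDerivAt (f := fun y => (y, t)) x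
    ((hasDerivAt_id x).prodMk (hasDerivAt_const x t))).deriv

theorem deriv_snd_eq_fderiv_uncurry {x t : ℝ} (hF : DifferentiableAt ℝ (uncurry F) (x, t)) :
    deriv (fun s => F x s) t = fderiv ℝ (uncurry F) (x, t) (0, 1) :=
  (hF.hasFDerivAt.comp_hasDerivAt (f := fun s => (x, s)) t
    ((hasDerivAt_const t x).prodMk (hasDerivAt_id t))).deriv

theorem ContDiff.differentiableAt_fst {n : WithTop ℕ∞} (hF : ContDiff ℝ n (uncurry F))
    (hn : n ≠ 0) (x t : ℝ) : DifferentiableAt ℝ (fun y => F y t) x :=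
  (hF.differentiable hn (x, t)).comp (f := fun y => (y, t)) x
    (differentiableAt_id.prodMk (differentiableAt_const t))

theorem ContDiff.differentiableAt_snd {n : WithTop ℕ∞} (hF : ContDiff ℝ n (uncurry F))
    (hn : n ≠ 0) (x t : ℝ) : DifferentiableAt ℝ (fun s => F x s) t :=
  (hF.differentiable hn (x, t)).comp (f := fun s => (x, s)) t
    ((differentiableAt_const x).prodMk differentiableAt_id)

theorem uncurry_deriv_fst_eq_fderiv (hF : Differentiable ℝ (uncurry F)) :
    (uncurry fun x t => deriv (fun y => F y t) x) = fun p => fderiv ℝ (uncurry F) p (1, 0) :=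
  funext fun p => deriv_fst_eq_fderiv_uncurry (hF p)

theorem uncurry_deriv_snd_eq_fderiv (hF : Differentiable ℝ (uncurry F)) :
    (uncurry fun x t => deriv (fun s => F x s) t) = fun p => fderiv ℝ (uncurry F) p (0, 1) :=
  funext fun p => deriv_snd_eq_fderiv_uncurry (hF p)

theorem ContDiff.contDiff_deriv_fst (hF : ContDiff ℝ 2 (uncurry F)) :
    ContDiff ℝ 1 (uncurry fun x t => deriv (fun y => F y t) x) := by
  rw [uncurry_deriv_fst_eq_fderiv (hF.differentiable two_ne_zero)]
  exact (hF.fderiv_right one_add_one_eq_two.le).clm_apply contDiff_const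

theorem ContDiff.contDiff_deriv_snd (hF : ContDiff ℝ 2 (uncurry F)) :
    ContDiff ℝ 1 (uncurry fun x t => deriv (fun s => F x s) t) := by
  rw [uncurry_deriv_snd_eq_fderiv (hF.differentiable two_ne_zero)]
  exact (hF.fderiv_right one_add_one_eq_two.le).clm_apply contDiff_const

theorem ContDiff.deriv_snd_deriv_fst_comm (hF : ContDiff ℝ 2 (uncurry F)) (x t : ℝ) :
    deriv (fun s => deriv (fun y => F y s) x) t = deriv (fun y => deriv (fun s => F y s) t) x := by
  have hdF : DifferentiableAt ℝ (fderiv ℝ (uncurry F)) (x, t) :=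
    (hF.fderiv_right one_add_one_eq_two.le).differentiable one_ne_zero (x, t)
  have fderiv_apply_eq (v w : ℝ × ℝ) : fderiv ℝ (fun p => fderiv ℝ (uncurry F) p w) (x, t) v =
      fderiv ℝ (fderiv ℝ (uncurry F)) (x, t) v w := by
    rw [fderiv_clm_apply hdF (differentiableAt_const w)]
    simp
  rw [deriv_snd_eq_fderiv_uncurry (hF.contDiff_deriv_fst.differentiable one_ne_zero (x, t)),
    deriv_fst_eq_fderiv_uncurry (hF.contDiff_deriv_snd.differentiable one_ne_zero (x, t)),
    uncurry_deriv_fst_eq_fderiv (hF.differentiable two_ne_zero),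
    uncurry_deriv_snd_eq_fderiv (hF.differentiable two_ne_zero), fderiv_apply_eq, fderiv_apply_eq,
    hF.contDiffAt.isSymmSndFDerivAt (by simp)]

end PartialDeriv

theorem deriv_one_div_comp_const_sub {g : ℝ → ℝ} {T τ : ℝ} (hg : DifferentiableAt ℝ g (T - τ))
    (hg0 : g (T - τ) ≠ 0) :
    deriv (fun s => 1 / g (T - s)) τ = deriv g (T - τ) / g (T - τ) ^ 2 := by
  simp_rw [one_div]
  rw [((hg.hasDerivAt.comp_const_sub T τ).fun_inv hg0).deriv]
  ring

theorem evolution_equation_for_psi_general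
    (T : ℝ)
    (V : ℝ → ℝ → ℝ) (α : ℝ → ℝ → ℝ → ℝ) (c : ℝ → ℝ → ℝ)
    (hV : ContDiff ℝ 2 (fun p : ℝ × ℝ => V p.1 p.2))
    (hc : ContDiff ℝ 1 (fun p : ℝ × ℝ => c p.1 p.2))
    (hVx : ∀ x t, 0 < deriv (fun y => V y t) x)
    (φ ψ : ℝ → ℝ → ℝ)
    (hφ : ∀ x τ, φ x τ =
      -(deriv (deriv (fun y => V y (T - τ))) x) / deriv (fun y => V y (T - τ)) x)
    (hψ : ∀ x τ, ψ x τ = 1 / deriv (fun y => V y (T - τ)) x)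
    (hpde : ∀ x t, deriv (fun s => V x s) t =
      α x (T - t) (φ x (T - t)) * deriv (fun y => V y t) x - c x t) :
    ∀ x : ℝ, ∀ τ ∈ Set.Icc (0:ℝ) T,
      deriv (fun s => ψ x s) τ =
        deriv (fun y => α y τ (φ y τ)) x * ψ x τ
          - α x τ (φ x τ) * φ x τ * ψ x τ
          - (ψ x τ) ^ 2 * deriv (fun y => c y (T - τ)) x := by
  intro x τ _
  set t := T - τ
  have hτ : T - t = τ := sub_sub_cancel T τ
  have hVx0 (y : ℝ) : deriv (fun y => V y t) y ≠ 0 := (hVx y t).ne'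
  have hVx_diff := hV.contDiff_deriv_fst.differentiableAt_fst one_ne_zero x t
  have hc_diff := hc.differentiableAt_fst one_ne_zero x t
  have hα_slice : (fun y => α y τ (φ y τ)) =
      fun y => (deriv (fun s => V y s) t + c y t) / deriv (fun y => V y t) y := by
    funext y
    rw [eq_div_iff (hVx0 y), hpde y t, hτ]
    ring
  have hαx : DifferentiableAt ℝ (fun y => α y τ (φ y τ)) x := by
    rw [hα_slice]
    have hVt_diff := hV.contDiff_deriv_snd.differentiableAt_fst one_ne_zero x t
    exact (hVt_diff.add hc_diff).div hVx_diff (hVx0 x)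
  have hVtx : deriv (fun y => deriv (fun s => V y s) t) x =
      deriv (fun y => α y τ (φ y τ)) x * deriv (fun y => V y t) x
        + α x τ (φ x τ) * deriv (deriv (fun y => V y t)) x - deriv (fun y => c y t) x := by
    simp_rw [hpde, hτ]
    exact ((hαx.hasDerivAt.mul hVx_diff.hasDerivAt).sub hc_diff.hasDerivAt).deriv
  have hψτ : deriv (fun s => ψ x s) τ =
      deriv (fun s => deriv (fun y => V y s) x) t / deriv (fun y => V y t) x ^ 2 := by
    simp_rw [hψ x]
    exact deriv_one_div_comp_const_sub
      (hV.contDiff_deriv_fst.differentiableAt_snd one_ne_zero x t) (hVx0 x)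
  have hVxx_eq : deriv (deriv (fun y => V y t)) x = -(φ x τ * deriv (fun y => V y t) x) := by
    rw [hφ, div_mul_cancel₀ _ (hVx0 x), neg_neg]
  have hψx : ψ x τ = 1 / deriv (fun y => V y t) x := hψ x τ
  rw [hψτ, hV.deriv_snd_deriv_fst_comm, hVtx, hψx, hVxx_eq]
  field_simp [hVx0 x]
  ring

theorem evolution_equation_for_psi
    (T : ℝ) (hT : 0 < T)
    (V : ℝ → ℝ → ℝ) (α : ℝ → ℝ → ℝ → ℝ) (c : ℝ → ℝ → ℝ)
    (hV : ContDiff ℝ 2 (fun p : ℝ × ℝ => V p.1 p.2))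
    (hα : ContDiff ℝ 1 (fun p : ℝ × ℝ × ℝ => α p.1 p.2.1 p.2.2))
    (hc : ContDiff ℝ 1 (fun p : ℝ × ℝ => c p.1 p.2))
    (hVx : ∀ x t, 0 < deriv (fun y => V y t) x)
    (φ ψ : ℝ → ℝ → ℝ)
    (hφ : ∀ x τ, φ x τ =
      -(deriv (deriv (fun y => V y (T - τ))) x) / deriv (fun y => V y (T - τ)) x)
    (hψ : ∀ x τ, ψ x τ = 1 / deriv (fun y => V y (T - τ)) x)
    (hpde : ∀ x t, deriv (fun s => V x s) t =
      α x (T - t) (φ x (T - t)) * deriv (fun y => V y t) x - c x t) :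
    ∀ x : ℝ, ∀ τ ∈ Set.Icc (0:ℝ) T,
      deriv (fun s => ψ x s) τ =
        deriv (fun y => α y τ (φ y τ)) x * ψ x τ
          - α x τ (φ x τ) * φ x τ * ψ x τ
          - (ψ x τ) ^ 2 * deriv (fun y => c y (T - τ)) x :=
  evolution_equation_for_psi_general T V α c hV hc hVx φ ψ hφ hψ hpde
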